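/- If G is a triangle-free finite simple graph on n ≥ 1 vertices and r is a real root of the matching polynomial m(G, x), then −r² is a real root of the σ-polynomial of the complement of G, i.e., σ(Ḡ, −r²) = 0. -/
import Mathlib

/-- `sigmaCoeff G i` is the number of `i`-colour partitions of `G`, i.e. the number of
partitions of the vertex set of `G` into `i` nonempty independent sets. -/
noncomputable def sigmaCoeff {V : Type} [Fintype V] [DecidableEq V]
    (G : SimpleGraph V) (i : ℕ) : ℕ :=
  Nat.card {F : Finset (Finset V) // F.card = i ∧
    (∀ p ∈ F, p.Nonempty) ∧
    (∀ p ∈ F, ∀ q ∈ F, p ≠ q → Disjoint p q) ∧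
    F.sup id = Finset.univ ∧
    (∀ p ∈ F, ∀ u ∈ p, ∀ v ∈ p, ¬ G.Adj u v)}

/-- The σ-polynomial of `G`, evaluated at `x` : `σ(G,x) = Σ_{i=0}^{n} a_i(G) x^i`. -/
noncomputable def sigmaPoly {V : Type} [Fintype V] [DecidableEq V]
    (G : SimpleGraph V) (x : ℝ) : ℝ :=
  ∑ i ∈ Finset.range (Fintype.card V + 1), (sigmaCoeff G i : ℝ) * x ^ i

/-- `matchCount G i` is the number of matchings of size `i` in `G`, i.e. the number of
sets of `i` pairwise disjoint edges of `G`. -/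
noncomputable def matchCount {V : Type} [Fintype V] [DecidableEq V]
    (G : SimpleGraph V) (i : ℕ) : ℕ :=
  Nat.card {M : Finset (Sym2 V) // M.card = i ∧
    (∀ e ∈ M, e ∈ G.edgeSet) ∧
    (∀ e ∈ M, ∀ f ∈ M, e ≠ f → ∀ v : V, v ∈ e → v ∉ f)}

/-- The matching polynomial of `G`, evaluated at `x` :
`m(G,x) = Σ_{i ≥ 0} (−1)^i m_i(G) x^{n−2i}`. -/
noncomputable def matchPoly {V : Type} [Fintype V] [DecidableEq V]
    (G : SimpleGraph V) (x : ℝ) : ℝ :=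
  ∑ i ∈ Finset.range (Fintype.card V / 2 + 1),
    (-1 : ℝ) ^ i * (matchCount G i : ℝ) * x ^ (Fintype.card V - 2 * i)

open Finset

namespace SigmaMatchAux

set_option linter.unusedSectionVars false

variable {V : Type} [Fintype V] [DecidableEq V]

/-- The finset of vertices of an unordered pair. -/
def s2f (e : Sym2 V) : Finset V :=
  Sym2.lift ⟨fun a b => ({a, b} : Finset V), fun a b => Finset.pair_comm a b⟩ e

@[simp] lemma s2f_mk (a b : V) : s2f s(a, b) = {a, b} := rfl

@[simp] lemma mem_s2f {v : V} {e : Sym2 V} : v ∈ s2f e ↔ v ∈ e := by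
  induction e using Sym2.ind with
  | _ a b => simp [Sym2.mem_iff]

lemma s2f_injective : Function.Injective (s2f (V := V)) := by
  intro e f h
  induction e using Sym2.ind with
  | _ a b =>
  induction f using Sym2.ind with
  | _ c d =>
    simp only [s2f_mk] at h
    have h' : ({a, b} : Set V) = {c, d} := by
      ext x
      simp only [Set.mem_insert_iff, Set.mem_singleton_iff]
      constructor <;> intro hx
      · have : x ∈ ({c, d} : Finset V) := by
          rw [← h]; rcases hx with rfl | rfl <;> simp
        simpa using this
      · have : x ∈ ({a, b} : Finset V) := by
          rw [h]; rcases hx with rfl | rfl <;> simp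
        simpa using this
    rw [Set.pair_eq_pair_iff] at h'
    rw [Sym2.eq_iff]
    tauto

lemma card_s2f {e : Sym2 V} (h : ¬ e.IsDiag) : (s2f e).card = 2 := by
  induction e using Sym2.ind with
  | _ a b =>
    rw [Sym2.mk_isDiag_iff] at h
    simp [Finset.card_insert_of_notMem, h]

lemma exists_pair {e : Sym2 V} (h : ¬ e.IsDiag) : ∃ a b, a ≠ b ∧ e = s(a, b) := by
  induction e using Sym2.ind with
  | _ a b =>
    rw [Sym2.mk_isDiag_iff] at h
    exact ⟨a, b, h, rfl⟩

lemma eq_pair_of_card_le {p : Finset V} (hp : p.card ≤ 2) {a b : V}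
    (ha : a ∈ p) (hb : b ∈ p) (hab : a ≠ b) : p = {a, b} := by
  have hsub : ({a, b} : Finset V) ⊆ p := by
    intro x hx; simp only [mem_insert, mem_singleton] at hx
    rcases hx with rfl | rfl <;> assumption
  have hcard : ({a, b} : Finset V).card = 2 := by simp [hab]
  exact (Finset.eq_of_subset_of_card_le hsub (by omega)).symm


/-- The matching associated to a partition into cliques. -/
def toM (F : Finset (Finset V)) : Finset (Sym2 V) :=
  F.sup fun p => p.sym2.filter fun e => ¬ e.IsDiag

/-- The partition associated to a matching. -/
def toF (M : Finset (Sym2 V)) : Finset (Finset V) :=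
  M.image s2f ∪ (Finset.univ \ M.sup s2f).image fun v => ({v} : Finset V)

lemma mem_toM {F : Finset (Finset V)} {e : Sym2 V} :
    e ∈ toM F ↔ ∃ p ∈ F, e ∈ p.sym2 ∧ ¬ e.IsDiag := by
  simp [toM, Finset.mem_sup, Finset.mem_filter]

lemma offdiag_sym2_eq {p : Finset V} (h2 : p.card ≤ 2) {a b : V}
    (ha : a ∈ p) (hb : b ∈ p) (hab : a ≠ b) :
    (p.sym2.filter fun e => ¬ e.IsDiag) = {s(a, b)} := by
  have hp : p = {a, b} := eq_pair_of_card_le h2 ha hb hab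
  subst hp
  ext e
  simp only [Finset.mem_filter, Finset.mem_singleton]
  constructor
  · rintro ⟨he, hd⟩
    obtain ⟨c, d, hcd, rfl⟩ := exists_pair hd
    have hc : c ∈ ({a, b} : Finset V) := (mem_sym2_iff.mp he) c (by simp)
    have hd' : d ∈ ({a, b} : Finset V) := (mem_sym2_iff.mp he) d (by simp)
    have : ({a, b} : Finset V) = {c, d} := eq_pair_of_card_le (by simp [hab]) hc hd' hcd
    apply s2f_injective
    simp [this.symm]
  · rintro rfl
    refine ⟨mk_mem_sym2_iff.mpr ⟨by simp, by simp⟩, ?_⟩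
    simpa using hab

lemma card_offdiag_sym2 {p : Finset V} (h1 : p.Nonempty) (h2 : p.card ≤ 2) :
    (p.sym2.filter fun e => ¬ e.IsDiag).card = p.card - 1 := by
  have hpos : 1 ≤ p.card := Finset.card_pos.mpr h1
  have hcase : p.card = 1 ∨ p.card = 2 := by omega
  rcases hcase with h | h
  · obtain ⟨a, rfl⟩ := Finset.card_eq_one.mp h
    have he : ({a} : Finset V).sym2.filter (fun e => ¬ e.IsDiag) = ∅ := by
      rw [Finset.eq_empty_iff_forall_notMem]
      intro e he
      rw [Finset.mem_filter] at he
      obtain ⟨c, d, hcd, rfl⟩ := exists_pair he.2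
      have hc := (mem_sym2_iff.mp he.1) c (by simp)
      have hd := (mem_sym2_iff.mp he.1) d (by simp)
      simp only [Finset.mem_singleton] at hc hd
      exact hcd (hc.trans hd.symm)
    rw [he]
    simp
  · obtain ⟨a, b, hab, rfl⟩ := Finset.card_eq_two.mp h
    rw [offdiag_sym2_eq h.le (by simp) (by simp) hab, h]
    simp

section Partition

variable {G : SimpleGraph V} {F : Finset (Finset V)}

/-- In a partition satisfying the complement-independence condition, every part is a
clique of `G`. -/
lemma clique_of_part (hind : ∀ p ∈ F, ∀ u ∈ p, ∀ v ∈ p, ¬ Gᶜ.Adj u v)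
    {p : Finset V} (hp : p ∈ F) {u v : V} (hu : u ∈ p) (hv : v ∈ p) (huv : u ≠ v) :
    G.Adj u v := by
  have := hind p hp u hu v hv
  rw [SimpleGraph.compl_adj] at this
  push_neg at this
  exact this huv

lemma part_card_le_two (hG : G.CliqueFree 3)
    (hind : ∀ p ∈ F, ∀ u ∈ p, ∀ v ∈ p, ¬ Gᶜ.Adj u v)
    {p : Finset V} (hp : p ∈ F) : p.card ≤ 2 := by
  by_contra hc
  obtain ⟨t, hts, ht3⟩ := Finset.exists_subset_card_eq (show 3 ≤ p.card by omega)
  exact hG t ⟨fun u hu v hv huv =>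
    clique_of_part hind hp (hts hu) (hts hv) huv, ht3⟩

lemma sum_card_parts (hdisj : ∀ p ∈ F, ∀ q ∈ F, p ≠ q → Disjoint p q)
    (hsup : F.sup id = Finset.univ) :
    ∑ p ∈ F, p.card = Fintype.card V := by
  have h1 : F.biUnion id = Finset.univ := by
    rw [← Finset.sup_eq_biUnion]; exact hsup
  calc ∑ p ∈ F, p.card = (F.biUnion id).card := (Finset.card_biUnion hdisj).symm
    _ = Fintype.card V := by rw [h1, Finset.card_univ]

lemma toM_disj_aux (hdisj : ∀ p ∈ F, ∀ q ∈ F, p ≠ q → Disjoint p q) :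
    ∀ p ∈ F, ∀ q ∈ F, p ≠ q →
      Disjoint (p.sym2.filter fun e => ¬ e.IsDiag) (q.sym2.filter fun e => ¬ e.IsDiag) := by
  intro p hp q hq hpq
  rw [Finset.disjoint_left]
  intro e hep heq
  rw [Finset.mem_filter] at hep heq
  obtain ⟨c, d, hcd, rfl⟩ := exists_pair hep.2
  have hcp : c ∈ p := (mem_sym2_iff.mp hep.1) c (by simp)
  have hcq : c ∈ q := (mem_sym2_iff.mp heq.1) c (by simp)
  exact (hdisj p hp q hq hpq).forall_ne_finset hcp hcq rfl

lemma card_toM (hG : G.CliqueFree 3) (hne : ∀ p ∈ F, p.Nonempty)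
    (hdisj : ∀ p ∈ F, ∀ q ∈ F, p ≠ q → Disjoint p q)
    (hsup : F.sup id = Finset.univ)
    (hind : ∀ p ∈ F, ∀ u ∈ p, ∀ v ∈ p, ¬ Gᶜ.Adj u v) :
    (toM F).card = Fintype.card V - F.card := by
  have h1 : toM F = F.biUnion fun p => p.sym2.filter fun e => ¬ e.IsDiag := by
    rw [toM, Finset.sup_eq_biUnion]
  rw [h1, Finset.card_biUnion (toM_disj_aux hdisj)]
  have h2 : ∀ p ∈ F, (p.sym2.filter fun e => ¬ e.IsDiag).card = p.card - 1 :=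
    fun p hp => card_offdiag_sym2 (hne p hp) (part_card_le_two hG hind hp)
  rw [Finset.sum_congr rfl h2]
  have h3 : ∑ p ∈ F, (p.card - 1) + F.card = ∑ p ∈ F, p.card := by
    rw [Finset.card_eq_sum_ones F, ← Finset.sum_add_distrib]
    exact Finset.sum_congr rfl fun p hp => by
      have := Finset.card_pos.mpr (hne p hp); omega
  have h4 := sum_card_parts hdisj hsup
  omega


lemma offdiag_unique {p : Finset V} (h2 : p.card ≤ 2) {e f : Sym2 V}
    (he : e ∈ p.sym2) (hde : ¬ e.IsDiag) (hf : f ∈ p.sym2) (hdf : ¬ f.IsDiag) :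
    e = f := by
  obtain ⟨a, b, hab, rfl⟩ := exists_pair hde
  have heq := offdiag_sym2_eq h2 ((mem_sym2_iff.mp he) a (by simp))
    ((mem_sym2_iff.mp he) b (by simp)) hab
  have hf' : f ∈ p.sym2.filter fun e => ¬ e.IsDiag := Finset.mem_filter.mpr ⟨hf, hdf⟩
  rw [heq, Finset.mem_singleton] at hf'
  exact hf'.symm

lemma toM_edges (hind : ∀ p ∈ F, ∀ u ∈ p, ∀ v ∈ p, ¬ Gᶜ.Adj u v) :
    ∀ e ∈ toM F, e ∈ G.edgeSet := by
  intro e he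
  obtain ⟨p, hp, hmem, hd⟩ := mem_toM.mp he
  obtain ⟨a, b, hab, rfl⟩ := exists_pair hd
  have ha : a ∈ p := (mem_sym2_iff.mp hmem) a (by simp)
  have hb : b ∈ p := (mem_sym2_iff.mp hmem) b (by simp)
  exact (SimpleGraph.mem_edgeSet G).mpr (clique_of_part hind hp ha hb hab)

lemma toM_matching (hG : G.CliqueFree 3)
    (hdisj : ∀ p ∈ F, ∀ q ∈ F, p ≠ q → Disjoint p q)
    (hind : ∀ p ∈ F, ∀ u ∈ p, ∀ v ∈ p, ¬ Gᶜ.Adj u v) :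
    ∀ e ∈ toM F, ∀ f ∈ toM F, e ≠ f → ∀ v : V, v ∈ e → v ∉ f := by
  intro e he f hf hef v hve hvf
  obtain ⟨p, hp, hmem, hd⟩ := mem_toM.mp he
  obtain ⟨q, hq, hmem', hd'⟩ := mem_toM.mp hf
  by_cases hpq : p = q
  · subst hpq
    exact hef (offdiag_unique (part_card_le_two hG hind hp) hmem hd hmem' hd')
  · have hvp : v ∈ p := (mem_sym2_iff.mp hmem) v hve
    have hvq : v ∈ q := (mem_sym2_iff.mp hmem') v hvf
    exact (hdisj p hp q hq hpq).forall_ne_finset hvp hvq rfl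

end Partition

section Matching

variable {G : SimpleGraph V} {M : Finset (Sym2 V)}

lemma mem_covered {v : V} : v ∈ M.sup s2f ↔ ∃ e ∈ M, v ∈ e := by
  simp [Finset.mem_sup]

lemma s2f_disjoint (hmatch : ∀ e ∈ M, ∀ f ∈ M, e ≠ f → ∀ v : V, v ∈ e → v ∉ f) :
    ∀ e ∈ M, ∀ f ∈ M, e ≠ f → Disjoint (s2f e) (s2f f) := by
  intro e he f hf hef
  rw [Finset.disjoint_left]
  intro v hv hv'
  exact hmatch e he f hf hef v (mem_s2f.mp hv) (mem_s2f.mp hv')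

lemma card_covered (hedge : ∀ e ∈ M, e ∈ G.edgeSet)
    (hmatch : ∀ e ∈ M, ∀ f ∈ M, e ≠ f → ∀ v : V, v ∈ e → v ∉ f) :
    (M.sup s2f).card = 2 * M.card := by
  rw [Finset.sup_eq_biUnion, Finset.card_biUnion (s2f_disjoint hmatch)]
  rw [Finset.sum_congr rfl fun e he =>
    card_s2f (G.not_isDiag_of_mem_edgeSet (hedge e he))]
  simp [mul_comm]

lemma mem_toF {p : Finset V} :
    p ∈ toF M ↔ (∃ e ∈ M, s2f e = p) ∨ (∃ v, v ∉ M.sup s2f ∧ p = {v}) := by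
  simp only [toF, Finset.mem_union, Finset.mem_image, Finset.mem_sdiff, Finset.mem_univ,
    true_and]
  constructor
  · rintro (⟨e, he, rfl⟩ | ⟨v, hv, rfl⟩)
    · exact Or.inl ⟨e, he, rfl⟩
    · exact Or.inr ⟨v, hv, rfl⟩
  · rintro (⟨e, he, rfl⟩ | ⟨v, hv, rfl⟩)
    · exact Or.inl ⟨e, he, rfl⟩
    · exact Or.inr ⟨v, hv, rfl⟩

lemma card_toF (hedge : ∀ e ∈ M, e ∈ G.edgeSet)
    (hmatch : ∀ e ∈ M, ∀ f ∈ M, e ≠ f → ∀ v : V, v ∈ e → v ∉ f) :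
    (toF M).card = M.card + (Fintype.card V - 2 * M.card) := by
  have hdisjAB : Disjoint (M.image s2f)
      ((Finset.univ \ M.sup s2f).image fun v => ({v} : Finset V)) := by
    rw [Finset.disjoint_left]
    rintro p hpA hpB
    obtain ⟨e, he, rfl⟩ := Finset.mem_image.mp hpA
    obtain ⟨v, _, hv2⟩ := Finset.mem_image.mp hpB
    have h2 : (s2f e).card = 2 := card_s2f (G.not_isDiag_of_mem_edgeSet (hedge e he))
    rw [← hv2] at h2
    simp at h2
  rw [toF, Finset.card_union_of_disjoint hdisjAB,
    Finset.card_image_of_injective _ s2f_injective,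
    Finset.card_image_of_injective _ Finset.singleton_injective,
    Finset.card_sdiff_of_subset (Finset.subset_univ _), Finset.card_univ,
    card_covered hedge hmatch]

lemma toF_nonempty : ∀ p ∈ toF M, p.Nonempty := by
  intro p hp
  rcases mem_toF.mp hp with ⟨e, _, rfl⟩ | ⟨v, _, rfl⟩
  · obtain ⟨a, b⟩ := e
    exact ⟨a, by simp⟩
  · simp

lemma toF_disjoint (hmatch : ∀ e ∈ M, ∀ f ∈ M, e ≠ f → ∀ v : V, v ∈ e → v ∉ f) :
    ∀ p ∈ toF M, ∀ q ∈ toF M, p ≠ q → Disjoint p q := by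
  intro p hp q hq hpq
  rcases mem_toF.mp hp with ⟨e, he, rfl⟩ | ⟨v, hv, rfl⟩ <;>
    rcases mem_toF.mp hq with ⟨f, hf, rfl⟩ | ⟨w, hw, rfl⟩
  · exact s2f_disjoint hmatch e he f hf (fun h => hpq (by rw [h]))
  · rw [Finset.disjoint_singleton_right]
    intro hmem
    exact hw (mem_covered.mpr ⟨e, he, mem_s2f.mp hmem⟩)
  · rw [Finset.disjoint_singleton_left]
    intro hmem
    exact hv (mem_covered.mpr ⟨f, hf, mem_s2f.mp hmem⟩)
  · rw [Finset.disjoint_singleton_right]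
    simp only [Finset.mem_singleton]
    rintro rfl
    exact hpq rfl

lemma toF_sup : (toF M).sup id = Finset.univ := by
  apply Finset.eq_univ_of_forall
  intro v
  rw [Finset.mem_sup]
  by_cases hv : v ∈ M.sup s2f
  · obtain ⟨e, he, hve⟩ := mem_covered.mp hv
    exact ⟨s2f e, mem_toF.mpr (Or.inl ⟨e, he, rfl⟩), mem_s2f.mpr hve⟩
  · exact ⟨{v}, mem_toF.mpr (Or.inr ⟨v, hv, rfl⟩), by simp⟩

lemma toF_ind (hedge : ∀ e ∈ M, e ∈ G.edgeSet) :
    ∀ p ∈ toF M, ∀ u ∈ p, ∀ v ∈ p, ¬ Gᶜ.Adj u v := by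
  intro p hp u hu v hv hadj
  rw [SimpleGraph.compl_adj] at hadj
  obtain ⟨huv, hnadj⟩ := hadj
  rcases mem_toF.mp hp with ⟨e, he, rfl⟩ | ⟨w, _, rfl⟩
  · obtain ⟨a, b, hab, rfl⟩ := exists_pair (G.not_isDiag_of_mem_edgeSet (hedge e he))
    have hadj' : G.Adj a b := (SimpleGraph.mem_edgeSet G).mp (hedge _ he)
    simp only [s2f_mk, Finset.mem_insert, Finset.mem_singleton] at hu hv
    rcases hu with rfl | rfl <;> rcases hv with rfl | rfl
    · exact huv rfl
    · exact hnadj hadj'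
    · exact hnadj hadj'.symm
    · exact huv rfl
  · simp only [Finset.mem_singleton] at hu hv
    exact huv (hu.trans hv.symm)

end Matching

section Inverse

variable {G : SimpleGraph V}

lemma toF_toM {F : Finset (Finset V)} (hG : G.CliqueFree 3)
    (hne : ∀ p ∈ F, p.Nonempty)
    (hdisj : ∀ p ∈ F, ∀ q ∈ F, p ≠ q → Disjoint p q)
    (hsup : F.sup id = Finset.univ)
    (hind : ∀ p ∈ F, ∀ u ∈ p, ∀ v ∈ p, ¬ Gᶜ.Adj u v) :
    toF (toM F) = F := by
  ext p
  constructor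
  · intro hp
    rcases mem_toF.mp hp with ⟨e, he, rfl⟩ | ⟨v, hv, rfl⟩
    · obtain ⟨q, hq, hmem, hd⟩ := mem_toM.mp he
      obtain ⟨a, b, hab, rfl⟩ := exists_pair hd
      have ha : a ∈ q := (mem_sym2_iff.mp hmem) a (by simp)
      have hb : b ∈ q := (mem_sym2_iff.mp hmem) b (by simp)
      have hq2 : q = {a, b} := eq_pair_of_card_le (part_card_le_two hG hind hq) ha hb hab
      rw [s2f_mk, ← hq2]
      exact hq
    · -- the singleton case
      have hvF : ∃ q ∈ F, v ∈ q := by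
        have : v ∈ F.sup id := by rw [hsup]; exact Finset.mem_univ v
        simpa using Finset.mem_sup.mp this
      obtain ⟨q, hq, hvq⟩ := hvF
      by_cases hq1 : q = {v}
      · rw [← hq1]; exact hq
      · exfalso
        have hw : ∃ w ∈ q, w ≠ v := by
          by_contra hc
          push_neg at hc
          exact hq1 (Finset.eq_singleton_iff_unique_mem.mpr ⟨hvq, hc⟩)
        obtain ⟨w, hwq, hwv⟩ := hw
        apply hv
        apply mem_covered.mpr
        refine ⟨s(v, w), mem_toM.mpr ⟨q, hq, ?_, ?_⟩, by simp⟩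
        · exact mk_mem_sym2_iff.mpr ⟨hvq, hwq⟩
        · simpa using hwv.symm
  · intro hp
    have hc2 := part_card_le_two hG hind hp
    have hc1 : 1 ≤ p.card := Finset.card_pos.mpr (hne p hp)
    have hcase : p.card = 1 ∨ p.card = 2 := by omega
    rcases hcase with h | h
    · obtain ⟨a, rfl⟩ := Finset.card_eq_one.mp h
      apply mem_toF.mpr
      refine Or.inr ⟨a, ?_, rfl⟩
      intro hcov
      obtain ⟨e, he, hae⟩ := mem_covered.mp hcov
      obtain ⟨q, hq, hmem, hd⟩ := mem_toM.mp he
      obtain ⟨c, d, hcd, rfl⟩ := exists_pair hd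
      have hcq : c ∈ q := (mem_sym2_iff.mp hmem) c (by simp)
      have hdq : d ∈ q := (mem_sym2_iff.mp hmem) d (by simp)
      have haq : a ∈ q := (mem_sym2_iff.mp hmem) a hae
      by_cases hpq : ({a} : Finset V) = q
      · rw [← hpq, Finset.mem_singleton] at hcq hdq
        exact hcd (hcq.trans hdq.symm)
      · exact (hdisj _ hp _ hq hpq).forall_ne_finset (Finset.mem_singleton_self a) haq rfl
    · obtain ⟨a, b, hab, rfl⟩ := Finset.card_eq_two.mp h
      apply mem_toF.mpr
      refine Or.inl ⟨s(a, b), mem_toM.mpr ⟨{a, b}, hp, ?_, by simpa using hab⟩, by simp⟩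
      exact mk_mem_sym2_iff.mpr ⟨by simp, by simp⟩

lemma toM_toF {M : Finset (Sym2 V)} (hedge : ∀ e ∈ M, e ∈ G.edgeSet) :
    toM (toF M) = M := by
  ext e
  constructor
  · intro he
    obtain ⟨p, hp, hmem, hd⟩ := mem_toM.mp he
    obtain ⟨a, b, hab, rfl⟩ := exists_pair hd
    have ha : a ∈ p := (mem_sym2_iff.mp hmem) a (by simp)
    have hb : b ∈ p := (mem_sym2_iff.mp hmem) b (by simp)
    rcases mem_toF.mp hp with ⟨f, hf, rfl⟩ | ⟨v, _, rfl⟩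
    · have h2 : (s2f f).card = 2 := card_s2f (G.not_isDiag_of_mem_edgeSet (hedge f hf))
      have heq : s2f f = {a, b} := eq_pair_of_card_le h2.le ha hb hab
      have : f = s(a, b) := s2f_injective (heq.trans (s2f_mk a b).symm)
      rw [← this]
      exact hf
    · rw [Finset.mem_singleton] at ha hb
      exact absurd (ha.trans hb.symm) hab
  · intro he
    refine mem_toM.mpr ⟨s2f e, mem_toF.mpr (Or.inl ⟨e, he, rfl⟩),
      mem_sym2_iff.mpr (fun a hae => mem_s2f.mpr hae),
      G.not_isDiag_of_mem_edgeSet (hedge e he)⟩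

end Inverse

end SigmaMatchAux

open SigmaMatchAux in
lemma matchCount_zero {V : Type} [Fintype V] [DecidableEq V] (G : SimpleGraph V)
    {k : ℕ} (h : Fintype.card V < 2 * k) : matchCount G k = 0 := by
  rw [matchCount, Nat.card_eq_zero]
  refine Or.inl ⟨?_⟩
  rintro ⟨M, hcard, hedge, hmatch⟩
  have h2 := card_covered hedge hmatch
  have h3 : (M.sup s2f).card ≤ Fintype.card V := by
    simpa using Finset.card_le_univ (M.sup s2f)
  omega

open SigmaMatchAux in
lemma sigmaCoeff_compl_eq_matchCount {V : Type} [Fintype V] [DecidableEq V]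
    (G : SimpleGraph V) (hG : G.CliqueFree 3) (i : ℕ) (hi : i ≤ Fintype.card V) :
    sigmaCoeff Gᶜ i = matchCount G (Fintype.card V - i) := by
  apply Nat.card_congr
  exact
    { toFun := fun X =>
        ⟨toM X.1,
          by rw [card_toM hG X.2.2.1 X.2.2.2.1 X.2.2.2.2.1 X.2.2.2.2.2, X.2.1],
          toM_edges X.2.2.2.2.2,
          toM_matching hG X.2.2.2.1 X.2.2.2.2.2⟩
      invFun := fun Y =>
        ⟨toF Y.1,
          by
            have h1 := card_toF Y.2.2.1 Y.2.2.2
            have h2 := card_covered Y.2.2.1 Y.2.2.2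
            have h3 : (Y.1.sup s2f).card ≤ Fintype.card V := by
              simpa using Finset.card_le_univ (Y.1.sup s2f)
            have h4 := Y.2.1
            omega,
          toF_nonempty,
          toF_disjoint Y.2.2.2,
          toF_sup,
          toF_ind Y.2.2.1⟩
      left_inv := fun X =>
        Subtype.ext (toF_toM hG X.2.2.1 X.2.2.2.1 X.2.2.2.2.1 X.2.2.2.2.2)
      right_inv := fun Y => Subtype.ext (toM_toF Y.2.2.1) }

lemma pow_helper (r : ℝ) (n j : ℕ) (h : 2 * j ≤ n) :
    (-(r ^ 2)) ^ (n - j) = ((-1) ^ n * r ^ n) * ((-1 : ℝ) ^ j * r ^ (n - 2 * j)) := by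
  obtain ⟨a, rfl⟩ : ∃ a, n = a + 2 * j := ⟨n - 2 * j, by omega⟩
  have h1 : a + 2 * j - j = a + j := by omega
  have h2 : a + 2 * j - 2 * j = a := by omega
  rw [h1, h2]
  have hb : (-(r ^ 2) : ℝ) = (-1) * r ^ 2 := by ring
  rw [hb, mul_pow, ← pow_mul]
  have hm : ((-1 : ℝ)) ^ (a + 2 * j) = (-1) ^ a * ((-1 : ℝ) ^ 2) ^ j := by
    rw [pow_add, pow_mul]
  have hm2 : ((-1 : ℝ) ^ 2) ^ j = 1 := by norm_num
  have he : 2 * (a + j) = (a + 2 * j) + a := by omega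
  rw [he, hm, hm2]
  ring

/-- If `G` is a triangle-free finite simple graph on `n ≥ 1` vertices and `r` is a real
root of the matching polynomial of `G`, then `−r²` is a real root of the σ-polynomial of
the complement of `G`. -/
theorem neg_sq_matching_root_is_sigma_root {V : Type} [Fintype V] [DecidableEq V]
    (G : SimpleGraph V) (hV : 1 ≤ Fintype.card V) (hG : G.CliqueFree 3)
    (r : ℝ) (hr : matchPoly G r = 0) :
    sigmaPoly Gᶜ (-(r ^ 2)) = 0 := by
  set n := Fintype.card V with hn
  have h1 : sigmaPoly Gᶜ (-(r ^ 2))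
      = ∑ i ∈ Finset.range (n + 1), (matchCount G (n - i) : ℝ) * (-(r ^ 2)) ^ i := by
    rw [sigmaPoly]
    refine Finset.sum_congr rfl fun i hi => ?_
    rw [sigmaCoeff_compl_eq_matchCount G hG i
      (Nat.lt_succ_iff.mp (Finset.mem_range.mp hi))]
  have h2 : ∑ i ∈ Finset.range (n + 1), (matchCount G (n - i) : ℝ) * (-(r ^ 2)) ^ i
      = ∑ j ∈ Finset.range (n + 1), (matchCount G j : ℝ) * (-(r ^ 2)) ^ (n - j) := by
    rw [← Finset.sum_range_reflect (fun j => (matchCount G j : ℝ) * (-(r ^ 2)) ^ (n - j))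
      (n + 1)]
    refine Finset.sum_congr rfl fun i hi => ?_
    have hi' : i ≤ n := Nat.lt_succ_iff.mp (Finset.mem_range.mp hi)
    have e1 : n + 1 - 1 - i = n - i := by omega
    have e2 : n - (n - i) = i := by omega
    rw [e1, e2]
  have h3 : ∑ j ∈ Finset.range (n + 1), (matchCount G j : ℝ) * (-(r ^ 2)) ^ (n - j)
      = ∑ j ∈ Finset.range (n / 2 + 1), (matchCount G j : ℝ) * (-(r ^ 2)) ^ (n - j) := by
    symm
    apply Finset.sum_subset
    · intro x hx
      simp only [Finset.mem_range] at hx ⊢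
      omega
    · intro x hx1 hx2
      simp only [Finset.mem_range] at hx1 hx2
      have : matchCount G x = 0 := matchCount_zero G (by omega)
      simp [this]
  have h4 : ∑ j ∈ Finset.range (n / 2 + 1), (matchCount G j : ℝ) * (-(r ^ 2)) ^ (n - j)
      = ((-1) ^ n * r ^ n) * matchPoly G r := by
    rw [matchPoly, Finset.mul_sum]
    refine Finset.sum_congr rfl fun j hj => ?_
    have h2j : 2 * j ≤ n := by
      have := Finset.mem_range.mp hj
      omega
    rw [pow_helper r n j h2j]
    ring
  rw [h1, h2, h3, h4, hr, mul_zero]
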